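/- Let r, p, q, k ∈ ℕ with r ≥ 2 and r·q ≤ p. Let T = Σ_{i+rj≤p, j≤q, i+j≤k} M_{f_{ij}} ∘ D_x^i ∘ D_y^j (f_{ij} ∈ R) be an operator which preserves 𝒮^r_{p,q} and has nonpositive y-degree. Then there exists P in the ℂ-linear span of all compositions of at most k elements of {W¹, …, W^{5+r}} (the empty composition being the identity) such that T(v) = P(v) for every v ∈ 𝒮^r_{p,q}; moreover, if k ≤ q then T = P as endomorphisms of R. -/

import Mathlib

noncomputable section

open MvPolynomial

/-- The bivariate polynomial ring `R = ℂ[x,y]`. -/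
abbrev R2 : Type := MvPolynomial (Fin 2) ℂ

/-- The variable `x`. -/
def Xv : R2 := X 0

/-- The variable `y`. -/
def Yv : R2 := X 1

/-- The partial derivative `∂_x` as a `ℂ`-linear endomorphism. -/
def Dx : Module.End ℂ R2 := (pderiv (0 : Fin 2)).toLinearMap

/-- The partial derivative `∂_y` as a `ℂ`-linear endomorphism. -/
def Dy : Module.End ℂ R2 := (pderiv (1 : Fin 2)).toLinearMap

/-- Multiplication by `f` as an endomorphism. -/
def Mf (f : R2) : Module.End ℂ R2 := LinearMap.mulLeft ℂ f

/-- All compositions (products) of at most `k` elements of `S`; the empty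
composition is the identity. -/
def prodsLE (k : ℕ) (S : Set (Module.End ℂ R2)) : Set (Module.End ℂ R2) :=
  {T | ∃ l : List (Module.End ℂ R2), l.length ≤ k ∧ (∀ a ∈ l, a ∈ S) ∧ l.prod = T}

/-- The rectangular module `ℛ_{n,m}`. -/
def Rmod (n m : ℕ) : Submodule ℂ R2 :=
  Submodule.span ℂ {P : R2 | ∃ i j : ℕ, i ≤ n ∧ j ≤ m ∧ P = Xv ^ i * Yv ^ j}

/-- The triangular module `𝒯ₙ`. -/
def Tmod (n : ℕ) : Submodule ℂ R2 :=
  Submodule.span ℂ {P : R2 | ∃ i j : ℕ, i + j ≤ n ∧ P = Xv ^ i * Yv ^ j}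

/-- The staircase module `𝒮^r_{p,q}`. -/
def Smod (r p q : ℕ) : Submodule ℂ R2 :=
  Submodule.span ℂ {P : R2 | ∃ i j : ℕ, i + r * j ≤ p ∧ j ≤ q ∧ P = Xv ^ i * Yv ^ j}

/-- An endomorphism has nonpositive `y`-degree if it maps each monomial `xᵃyᵇ`
into the span of the monomials `x^c y^e` with `e ≤ b`. -/
def NonposY (T : Module.End ℂ R2) : Prop :=
  ∀ a b : ℕ, T (Xv ^ a * Yv ^ b) ∈
    Submodule.span ℂ {P : R2 | ∃ c e : ℕ, e ≤ b ∧ P = Xv ^ c * Yv ^ e}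

/-- `W¹ = D_x`. -/
def W1 : Module.End ℂ R2 := Dx

/-- `W² = M_{x²}∘D_x + r·M_{xy}∘D_y − p·M_x`. -/
def W2 (r p : ℕ) : Module.End ℂ R2 :=
  Mf (Xv ^ 2) * Dx + (r : ℂ) • (Mf (Xv * Yv) * Dy) - (p : ℂ) • Mf Xv

/-- `W³ = M_x∘D_x − (p/2)·id`. -/
def W3 (p : ℕ) : Module.End ℂ R2 := Mf Xv * Dx - ((p : ℂ) / 2) • 1

/-- `W⁴ = M_y∘D_y`. -/
def W4 : Module.End ℂ R2 := Mf Yv * Dy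

/-- `W^{5+i} = M_{xⁱ}∘D_y`. -/
def W5i (i : ℕ) : Module.End ℂ R2 := Mf (Xv ^ i) * Dy

/-- The generating set `{W¹, …, W^{5+r}}` of the realization `𝔤^{24,r}_p`. -/
def Wset (r p : ℕ) : Set (Module.End ℂ R2) :=
  {W1, W2 r p, W3 p, W4} ∪ {T | ∃ i ≤ r, T = W5i i}

/-- The staircase index set `{(i,j) : i + r·j ≤ p, j ≤ q}`. -/
def sIdx (r p q : ℕ) : Finset (ℕ × ℕ) :=
  (Finset.range (p + 1) ×ˢ Finset.range (q + 1)).filter (fun ij => ij.1 + r * ij.2 ≤ p)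

/-!
Expanding each `f_{ij}` into monomials splits `T` into finitely many components of shift `(u, v)`,
each mapping `x^a y^b` to `λ(a, b) x^{a+u} y^{b+v}` with `λ` in the span of the falling-factorial
symbols `(x)_c (y)_e`, `c + e ≤ k`; composing shift operators multiplies their symbols. The
components with `v > 0` vanish since `T` has nonpositive `y`-degree. For `v = -t ≤ 0` and `u ≤ r t`
each `(x)_c (y)_e` is carried by `c + e` generators: `t` of the `W^{5+i}` lower `y` while raising
`x` by `i ≤ r`, `W¹` lowers `x`, and `W³`, `W⁴` supply the remaining affine factors. For
`u = m + r t` with `m > 0`, rewrite `λ` in the basis `(x + r y - p)^{(c)} (y)_e` (rising factorial),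
whose first factor comes from powers of `W²`. The terms with `c ≥ m` are carried by generators.
The terms with `c < m` vanish at the points of the staircase: one indexed outside it has a symbol
vanishing there, and one indexed inside it has coefficient zero, because `T` preserves `𝒮^r_{p,q}`
and at the corners `(p - c - r e, e)` these terms form a triangular system. When `k ≤ q` every
index lies in the staircase, so `T = P`.
-/

open Finset

namespace Staircase

section Pochhammer

open Polynomial

variable {R : Type*} [CommRing R]

lemma mul_descPochhammer_eval_sub_one (n : ℕ) (x : R) :
    x * (descPochhammer R n).eval (x - 1) = (descPochhammer R (n + 1)).eval x := by
  simp [descPochhammer_succ_left]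

lemma descPochhammer_eval_mul_eval_sub (n m : ℕ) (x : R) :
    (descPochhammer R n).eval x * (descPochhammer R m).eval (x - n) =
      (descPochhammer R (n + m)).eval x := by
  rw [← descPochhammer_mul]
  simp

lemma ascPochhammer_eval_mul_eval_add {S : Type*} [CommSemiring S] (n m : ℕ) (x : S) :
    (ascPochhammer S n).eval x * (ascPochhammer S m).eval (x + n) =
      (ascPochhammer S (n + m)).eval x := by
  rw [← ascPochhammer_mul]
  simp

end Pochhammer

section Monomials

def monoExp (a b : ℕ) : Fin 2 →₀ ℕ := Finsupp.single 0 a + Finsupp.single 1 b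

@[simp] lemma monoExp_apply_zero (a b : ℕ) : monoExp a b 0 = a := by simp [monoExp]

@[simp] lemma monoExp_apply_one (a b : ℕ) : monoExp a b 1 = b := by simp [monoExp]

lemma monoExp_inj {a b a' b' : ℕ} : monoExp a b = monoExp a' b' ↔ a = a' ∧ b = b' := by
  refine ⟨fun h => ⟨by simpa using congr($h 0), by simpa using congr($h 1)⟩, ?_⟩
  rintro ⟨rfl, rfl⟩
  rfl

lemma eq_monoExp (s : Fin 2 →₀ ℕ) : s = monoExp (s 0) (s 1) := by
  ext i
  fin_cases i <;> simp

def mono (a b : ℕ) : R2 := monomial (monoExp a b) 1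

lemma Xv_pow_mul_Yv_pow (a b : ℕ) : Xv ^ a * Yv ^ b = mono a b := by
  simp [Xv, Yv, mono, monoExp, X_pow_eq_monomial, monomial_mul]

/-- The monomial `x^a y^b` for integer exponents, taken to be `0` when an exponent is negative. -/
def monoZ (a b : ℤ) : R2 := if 0 ≤ a ∧ 0 ≤ b then mono a.toNat b.toNat else 0

@[simp] lemma monoZ_natCast (a b : ℕ) : monoZ a b = mono a b := by simp [monoZ]

lemma coeff_monoExp_monoZ (A B : ℕ) (a b : ℤ) :
    coeff (monoExp A B) (monoZ a b) = if a = A ∧ b = B then 1 else 0 := by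
  unfold monoZ mono
  split_ifs with h₁ h₂ h₂ <;> simp only [coeff_monomial, coeff_zero, monoExp_inj] at * <;> grind

lemma ext_mono {S T : Module.End ℂ R2} (h : ∀ a b : ℕ, S (mono a b) = T (mono a b)) : S = T :=
  (basisMonomials (Fin 2) ℂ).ext fun s => by
    rw [coe_basisMonomials, eq_monoExp s]
    exact h _ _

lemma eqOn_Smod_of_mono {r p q : ℕ} {S T : Module.End ℂ R2}
    (h : ∀ a b : ℕ, a + r * b ≤ p → b ≤ q → S (mono a b) = T (mono a b)) :
    ∀ v ∈ Smod r p q, S v = T v := by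
  suffices Smod r p q ≤ LinearMap.eqLocus S T from fun v hv => this hv
  refine Submodule.span_le.2 ?_
  rintro _ ⟨a, b, hab, hb, rfl⟩
  simpa [Xv_pow_mul_Yv_pow] using h a b hab hb

lemma coeff_eq_zero_of_mem_span {P : ℕ → ℕ → Prop} {S : Set R2}
    (hS : ∀ g ∈ S, ∃ c e, P c e ∧ g = Xv ^ c * Yv ^ e) {g : R2} (hg : g ∈ Submodule.span ℂ S)
    {A B : ℕ} (hAB : ¬ P A B) : coeff (monoExp A B) g = 0 := by
  induction hg using Submodule.span_induction with
  | mem g hg =>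
    obtain ⟨c, e, hce, rfl⟩ := hS g hg
    rw [Xv_pow_mul_Yv_pow, mono, coeff_monomial, if_neg]
    rintro h
    obtain ⟨rfl, rfl⟩ := monoExp_inj.1 h
    exact hAB hce
  | zero => simp
  | add g g' _ _ hg hg' => simp [hg, hg']
  | smul c g _ hg => simp [hg]

end Monomials

section ShiftOperators

abbrev Symbol := ℂ → ℂ → ℂ

def IsShiftOp (u v : ℤ) (σ : Symbol) (P : Module.End ℂ R2) : Prop :=
  ∀ a b : ℕ, P (mono a b) = σ a b • monoZ (a + u) (b + v)

namespace IsShiftOp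

variable {u v u₁ v₁ u₂ v₂ : ℤ} {σ τ σ₁ σ₂ : Symbol} {P Q P₁ P₂ : Module.End ℂ R2}

lemma one : IsShiftOp 0 0 1 1 := fun a b => by simp

lemma add (hP : IsShiftOp u v σ P) (hQ : IsShiftOp u v τ Q) : IsShiftOp u v (σ + τ) (P + Q) :=
  fun a b => by simp [hP a b, hQ a b, add_smul]

lemma smul (hP : IsShiftOp u v σ P) (c : ℂ) : IsShiftOp u v (c • σ) (c • P) :=
  fun a b => by simp [hP a b, smul_smul]

lemma sub (hP : IsShiftOp u v σ P) (hQ : IsShiftOp u v τ Q) : IsShiftOp u v (σ - τ) (P - Q) :=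
  fun a b => by simp [hP a b, hQ a b, sub_smul]

lemma congr_symbol (hP : IsShiftOp u v σ P) (h : ∀ x y, σ x y = τ x y) : IsShiftOp u v τ P :=
  fun a b => by rw [hP a b, h]

lemma mul (h₁ : IsShiftOp u₁ v₁ σ₁ P₁) (h₂ : IsShiftOp u₂ v₂ σ₂ P₂)
    (hvan : ∀ a b : ℕ, (a : ℤ) + u₂ < 0 ∨ (b : ℤ) + v₂ < 0 → σ₂ a b = 0)
    (hu : u₁ + u₂ = u) (hv : v₁ + v₂ = v) (hσ : ∀ x y, σ₂ x y * σ₁ (x + u₂) (y + v₂) = σ x y) :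
    IsShiftOp u v σ (P₁ * P₂) := by
  intro a b
  rw [Module.End.mul_apply, h₂ a b, map_smul]
  by_cases hpos : 0 ≤ (a : ℤ) + u₂ ∧ 0 ≤ (b : ℤ) + v₂
  · obtain ⟨A, hA⟩ := Int.eq_ofNat_of_zero_le hpos.1
    obtain ⟨B, hB⟩ := Int.eq_ofNat_of_zero_le hpos.2
    have hAc : (A : ℂ) = a + u₂ := by exact_mod_cast hA.symm
    have hBc : (B : ℂ) = b + v₂ := by exact_mod_cast hB.symm
    rw [hA, hB, monoZ_natCast, h₁, smul_smul, hAc, hBc, hσ, ← hA, ← hB, ← hu, ← hv]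
    congr 2 <;> ring
  · rw [← hσ, hvan a b (by omega), zero_smul, zero_mul, zero_smul]

end IsShiftOp

lemma isShiftOp_Mf_monomial (s : Fin 2 →₀ ℕ) (μ : ℂ) :
    IsShiftOp (s 0) (s 1) (fun _ _ => μ) (Mf (monomial s μ)) := by
  intro a b
  have hexp : s + monoExp a b = monoExp (a + s 0) (b + s 1) :=
    Finsupp.ext fun i => by fin_cases i <;> simp [monoExp, add_comm]
  rw [Mf, LinearMap.mulLeft_apply, mono, monomial_mul, mul_one, hexp,
    show ((a : ℤ) + s 0) = ((a + s 0 : ℕ) : ℤ) by push_cast; ring,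
    show ((b : ℤ) + s 1) = ((b + s 1 : ℕ) : ℤ) by push_cast; ring, monoZ_natCast, mono,
    smul_monomial, smul_eq_mul, mul_one]

lemma isShiftOp_Mf_Xv_pow_mul_Yv_pow (c e : ℕ) : IsShiftOp c e 1 (Mf (Xv ^ c * Yv ^ e)) := by
  have h := isShiftOp_Mf_monomial (monoExp c e) 1
  simp only [monoExp_apply_zero, monoExp_apply_one] at h
  rw [Xv_pow_mul_Yv_pow]
  exact h

lemma isShiftOp_Dx : IsShiftOp (-1) 0 (fun x _ => x) Dx := by
  intro a b
  cases a with
  | zero => simp [Dx, mono, pderiv_monomial]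
  | succ a =>
    have : monoExp (a + 1) b - Finsupp.single 0 1 = monoExp a b := by
      ext i; fin_cases i <;> simp [monoExp]
    simp [Dx, mono, pderiv_monomial, this, smul_monomial]

lemma isShiftOp_Dy : IsShiftOp 0 (-1) (fun _ y => y) Dy := by
  intro a b
  cases b with
  | zero => simp [Dy, mono, pderiv_monomial]
  | succ b =>
    have : monoExp a (b + 1) - Finsupp.single 1 1 = monoExp a b := by
      ext i; fin_cases i <;> simp [monoExp]
    simp [Dy, mono, pderiv_monomial, this, smul_monomial]

lemma isShiftOp_Dx_pow (i : ℕ) :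
    IsShiftOp (-i) 0 (fun x _ => (descPochhammer ℂ i).eval x) (Dx ^ i) := by
  induction i with
  | zero => exact IsShiftOp.one.congr_symbol fun x y => by simp
  | succ i ih =>
    rw [pow_succ]
    refine ih.mul isShiftOp_Dx (fun a b h => by simp only [Nat.cast_eq_zero]; omega)
      (by push_cast; ring) rfl fun x y => ?_
    simpa [sub_eq_add_neg] using mul_descPochhammer_eval_sub_one i x

lemma isShiftOp_Dy_pow (j : ℕ) :
    IsShiftOp 0 (-j) (fun _ y => (descPochhammer ℂ j).eval y) (Dy ^ j) := by
  induction j with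
  | zero => exact IsShiftOp.one.congr_symbol fun x y => by simp
  | succ j ih =>
    rw [pow_succ]
    refine ih.mul isShiftOp_Dy (fun a b h => by simp only [Nat.cast_eq_zero]; omega)
      rfl (by push_cast; ring) fun x y => ?_
    simpa [sub_eq_add_neg] using mul_descPochhammer_eval_sub_one j y

lemma isShiftOp_W1 : IsShiftOp (-1) 0 (fun x _ => x) W1 := isShiftOp_Dx

lemma isShiftOp_W2 (r p : ℕ) : IsShiftOp 1 0 (fun x y => x + r * y - p) (W2 r p) := by
  have hx : IsShiftOp 1 0 (fun x _ => x) (Mf (Xv ^ 2) * Dx) := by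
    simpa using (isShiftOp_Mf_Xv_pow_mul_Yv_pow 2 0).mul isShiftOp_Dx
      (fun a b h => by simp only [Nat.cast_eq_zero]; omega) (by norm_num) rfl
      (fun x y => mul_one x)
  have hy : IsShiftOp 1 0 (fun _ y => y) (Mf (Xv * Yv) * Dy) := by
    simpa using (isShiftOp_Mf_Xv_pow_mul_Yv_pow 1 1).mul isShiftOp_Dy
      (fun a b h => by simp only [Nat.cast_eq_zero]; omega) rfl (by norm_num)
      (fun x y => mul_one y)
  have h1 : IsShiftOp 1 0 1 (Mf Xv) := by simpa using isShiftOp_Mf_Xv_pow_mul_Yv_pow 1 0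
  exact ((hx.add (hy.smul r)).sub (h1.smul p)).congr_symbol fun x y => by simp

lemma isShiftOp_W3 (p : ℕ) : IsShiftOp 0 0 (fun x _ => x - p / 2) (W3 p) := by
  have hx : IsShiftOp 0 0 (fun x _ => x) (Mf Xv * Dx) := by
    simpa using (isShiftOp_Mf_Xv_pow_mul_Yv_pow 1 0).mul isShiftOp_Dx
      (fun a b h => by simp only [Nat.cast_eq_zero]; omega) (by norm_num) rfl
      (fun x y => mul_one x)
  exact (hx.sub (IsShiftOp.one.smul _)).congr_symbol fun x y => by simp

lemma isShiftOp_W4 : IsShiftOp 0 0 (fun _ y => y) W4 := by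
  simpa [W4] using (isShiftOp_Mf_Xv_pow_mul_Yv_pow 0 1).mul isShiftOp_Dy
    (fun a b h => by simp only [Nat.cast_eq_zero]; omega) rfl (by norm_num) (fun x y => mul_one y)

lemma isShiftOp_W5i (i : ℕ) : IsShiftOp i (-1) (fun _ y => y) (W5i i) := by
  simpa [W5i] using (isShiftOp_Mf_Xv_pow_mul_Yv_pow i 0).mul isShiftOp_Dy
    (fun a b h => by simp only [Nat.cast_eq_zero]; omega) (by ring) (by ring) (fun x y => mul_one y)

end ShiftOperators

section Realizable

section ProdsLE

variable {S : Set (Module.End ℂ R2)}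

lemma prodsLE_mono {n n' : ℕ} (h : n ≤ n') : prodsLE n S ⊆ prodsLE n' S :=
  fun _ ⟨l, hl, hS, hP⟩ => ⟨l, hl.trans h, hS, hP⟩

lemma one_mem_prodsLE (n : ℕ) : 1 ∈ prodsLE n S := ⟨[], by simp, by simp, rfl⟩

lemma mem_prodsLE_one {W : Module.End ℂ R2} (hW : W ∈ S) : W ∈ prodsLE 1 S :=
  ⟨[W], by simp, by simpa using hW, by simp⟩

open scoped Pointwise in
lemma mul_mem_span_prodsLE {n₁ n₂ : ℕ} {A B : Module.End ℂ R2}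
    (hA : A ∈ Submodule.span ℂ (prodsLE n₁ S)) (hB : B ∈ Submodule.span ℂ (prodsLE n₂ S)) :
    A * B ∈ Submodule.span ℂ (prodsLE (n₁ + n₂) S) := by
  have hprod : prodsLE n₁ S * prodsLE n₂ S ⊆ prodsLE (n₁ + n₂) S := by
    rintro _ ⟨_, ⟨l₁, hl₁, hS₁, rfl⟩, _, ⟨l₂, hl₂, hS₂, rfl⟩, rfl⟩
    refine ⟨l₁ ++ l₂, by simp; omega, fun a ha => ?_, List.prod_append⟩
    rcases List.mem_append.1 ha with h | h
    exacts [hS₁ a h, hS₂ a h]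
  have hAB := Submodule.mul_mem_mul hA hB
  rw [Submodule.span_mul_span] at hAB
  exact Submodule.span_mono hprod hAB

end ProdsLE

def realizable (r p n : ℕ) (u v : ℤ) : Submodule ℂ Symbol where
  carrier := {σ | ∃ P ∈ Submodule.span ℂ (prodsLE n (Wset r p)), IsShiftOp u v σ P}
  add_mem' := fun ⟨P, hP, hσ⟩ ⟨Q, hQ, hτ⟩ => ⟨P + Q, add_mem hP hQ, hσ.add hτ⟩
  zero_mem' := ⟨0, zero_mem _, fun a b => by simp⟩
  smul_mem' := fun c _ ⟨P, hP, hσ⟩ => ⟨c • P, Submodule.smul_mem _ c hP, hσ.smul c⟩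

variable {r p n n₁ n₂ : ℕ} {u v u₁ v₁ u₂ v₂ : ℤ} {σ τ σ₁ σ₂ : Symbol}

lemma realizable_mono (h : n₁ ≤ n₂) : realizable r p n₁ u v ≤ realizable r p n₂ u v :=
  fun _ ⟨P, hP, hσ⟩ => ⟨P, Submodule.span_mono (prodsLE_mono h) hP, hσ⟩

lemma mem_realizable_of_mem_Wset {W : Module.End ℂ R2} (hW : W ∈ Wset r p)
    (hσ : IsShiftOp u v σ W) : σ ∈ realizable r p 1 u v :=
  ⟨W, Submodule.subset_span (mem_prodsLE_one hW), hσ⟩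

lemma one_mem_realizable : (fun _ _ => 1 : Symbol) ∈ realizable r p n 0 0 :=
  ⟨1, Submodule.subset_span (one_mem_prodsLE n), IsShiftOp.one⟩

lemma comp_mem_realizable (h₁ : σ₁ ∈ realizable r p n₁ u₁ v₁)
    (h₂ : σ₂ ∈ realizable r p n₂ u₂ v₂)
    (hvan : ∀ a b : ℕ, (a : ℤ) + u₂ < 0 ∨ (b : ℤ) + v₂ < 0 → σ₂ a b = 0)
    (hu : u₁ + u₂ = u) (hv : v₁ + v₂ = v) (hσ : ∀ x y, σ₂ x y * σ₁ (x + u₂) (y + v₂) = σ x y) :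
    σ ∈ realizable r p (n₁ + n₂) u v := by
  obtain ⟨P₁, hP₁, hσ₁⟩ := h₁
  obtain ⟨P₂, hP₂, hσ₂⟩ := h₂
  exact ⟨P₁ * P₂, mul_mem_span_prodsLE hP₁ hP₂, hσ₁.mul hσ₂ hvan hu hv hσ⟩

lemma mul_mem_realizable (h₁ : σ ∈ realizable r p n₁ u v) (h₂ : τ ∈ realizable r p n₂ 0 0) :
    σ * τ ∈ realizable r p (n₁ + n₂) u v :=
  comp_mem_realizable h₁ h₂ (fun a b h => by omega) (add_zero u) (add_zero v)
    fun x y => by simp [mul_comm]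

lemma affine_mem_realizable (α β γ : ℂ) :
    (fun x y => α * x + β * y + γ) ∈ realizable r p 1 0 0 := by
  have hx : (fun x _ => x - p / 2 : Symbol) ∈ realizable r p 1 0 0 :=
    mem_realizable_of_mem_Wset (Or.inl (by simp)) (isShiftOp_W3 p)
  have hy : (fun _ y => y : Symbol) ∈ realizable r p 1 0 0 :=
    mem_realizable_of_mem_Wset (Or.inl (by simp)) isShiftOp_W4
  have hsum := add_mem (add_mem (Submodule.smul_mem _ α hx) (Submodule.smul_mem _ β hy))
    (Submodule.smul_mem _ (γ + α * p / 2) (one_mem_realizable (r := r) (p := p) (n := 1)))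
  convert hsum using 1
  funext x y
  simp
  ring

lemma descPochhammer_affine_mem_realizable (α β γ : ℂ) (n : ℕ) :
    (fun x y => (descPochhammer ℂ n).eval (α * x + β * y + γ)) ∈ realizable r p n 0 0 := by
  induction n with
  | zero => simpa using one_mem_realizable (r := r) (p := p) (n := 0)
  | succ n ih =>
    convert mul_mem_realizable ih (affine_mem_realizable α β (γ - n)) using 1
    funext x y
    simp only [Pi.mul_apply, descPochhammer_succ_eval]
    ring

lemma ascPochhammer_affine_mem_realizable (α β γ : ℂ) (n : ℕ) :
    (fun x y => (ascPochhammer ℂ n).eval (α * x + β * y + γ)) ∈ realizable r p n 0 0 := by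
  induction n with
  | zero => simpa using one_mem_realizable (r := r) (p := p) (n := 0)
  | succ n ih =>
    convert mul_mem_realizable ih (affine_mem_realizable α β (γ + n)) using 1
    funext x y
    simp only [Pi.mul_apply, ascPochhammer_succ_eval]
    ring

lemma descPochhammer_W1_mem_realizable (n : ℕ) :
    (fun x _ => (descPochhammer ℂ n).eval x) ∈ realizable r p n (-n) 0 := by
  induction n with
  | zero => simpa using one_mem_realizable (r := r) (p := p) (n := 0)
  | succ n ih =>
    refine comp_mem_realizable ih (mem_realizable_of_mem_Wset (Or.inl (by simp)) isShiftOp_W1)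
      (fun a b h => by simp only [Nat.cast_eq_zero]; omega) (by push_cast; ring) rfl
      fun x y => ?_
    simpa [sub_eq_add_neg] using mul_descPochhammer_eval_sub_one n x

lemma ascPochhammer_W2_mem_realizable (m : ℕ) :
    (fun x y => (ascPochhammer ℂ m).eval (x + (r : ℂ) * y - p)) ∈ realizable r p m m 0 := by
  induction m with
  | zero => simpa using one_mem_realizable (r := r) (p := p) (n := 0)
  | succ m ih =>
    refine comp_mem_realizable ih (mem_realizable_of_mem_Wset (Or.inl (by simp)) (isShiftOp_W2 r p))
      (fun a b h => by omega) (by push_cast; ring) rfl fun x y => ?_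
    simp only [ascPochhammer_succ_left, Polynomial.eval_mul, Polynomial.eval_X,
      Polynomial.eval_comp, Polynomial.eval_add, Polynomial.eval_one]
    push_cast
    ring_nf

lemma descPochhammer_W5_mem_realizable {t I : ℕ} (hI : I ≤ r * t) :
    (fun _ y => (descPochhammer ℂ t).eval y) ∈ realizable r p t I (-t) := by
  induction t generalizing I with
  | zero =>
    obtain rfl : I = 0 := by simpa using hI
    simpa using one_mem_realizable (r := r) (p := p) (n := 0)
  | succ t ih =>
    obtain ⟨i, hir, hiI, hI'⟩ : ∃ i ≤ r, i ≤ I ∧ I - i ≤ r * t :=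
      ⟨min r I, min_le_left _ _, min_le_right _ _, by rw [Nat.mul_succ] at hI; omega⟩
    have hW5 : (fun _ y => y : Symbol) ∈ realizable r p 1 i (-1) :=
      mem_realizable_of_mem_Wset (Or.inr ⟨i, hir, rfl⟩) (isShiftOp_W5i i)
    refine comp_mem_realizable (ih hI') hW5
      (fun a b h => by simp only [Nat.cast_eq_zero]; omega) (by omega) (by push_cast; ring)
      fun x y => ?_
    simpa [sub_eq_add_neg] using mul_descPochhammer_eval_sub_one t y

end Realizable

section Symbols

/-- The symbol of `M_g ∘ D_x^c ∘ D_y^e` for a monomial `g` with coefficient `1`. -/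
def descSymbol (ce : ℕ × ℕ) : Symbol :=
  fun x y => (descPochhammer ℂ ce.1).eval x * (descPochhammer ℂ ce.2).eval y

/-- The symbol of `D_y^e ∘ (W²)^c`. Its first factor, a rising factorial, vanishes on the diagonals
`x + r y = p - j` for `j < c`. -/
def stairSymbol (r p : ℕ) (ce : ℕ × ℕ) : Symbol :=
  fun x y => (ascPochhammer ℂ ce.1).eval (x + r * y - p) * (descPochhammer ℂ ce.2).eval y

variable {r p : ℕ}

lemma descSymbol_mem_realizable {c e t : ℕ} {u : ℤ} (hte : t ≤ e) (hu : u ≤ r * t)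
    (hcu : -(c : ℤ) ≤ u) : descSymbol (c, e) ∈ realizable r p (c + e) u (-t) := by
  have hrt : (0 : ℤ) ≤ r * t := by positivity
  obtain ⟨I, n, rfl, hI, hn⟩ : ∃ I n : ℕ, u = I - n ∧ I ≤ r * t ∧ n ≤ c :=
    ⟨u.toNat, (-u).toNat, by omega, by zify; omega, by omega⟩
  have hlow : (fun x y => (descPochhammer ℂ n).eval x * (descPochhammer ℂ t).eval y) ∈
      realizable r p (t + n) (I - n) (-t) :=
    comp_mem_realizable (descPochhammer_W5_mem_realizable hI) (descPochhammer_W1_mem_realizable n)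
      (fun a b h => descPochhammer_eval_coe_nat_of_lt (by omega)) (by ring) (by ring)
      fun x y => by simp
  have hrest := mul_mem_realizable
    (descPochhammer_affine_mem_realizable (r := r) (p := p) 1 0 (-n) (c - n))
    (descPochhammer_affine_mem_realizable 0 1 (-t) (e - t))
  convert realizable_mono (n₂ := c + e) (by omega) (mul_mem_realizable hlow hrest) using 1
  funext x y
  have hx := descPochhammer_eval_mul_eval_sub n (c - n) x
  have hy := descPochhammer_eval_mul_eval_sub t (e - t) y
  rw [Nat.add_sub_cancel' hn] at hx
  rw [Nat.add_sub_cancel' hte] at hy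
  simp only [descSymbol, Pi.mul_apply, ← hx, ← hy]
  ring_nf

lemma stairSymbol_mem_realizable {c e t m : ℕ} (hte : t ≤ e) (hmc : m ≤ c) :
    stairSymbol r p (c, e) ∈ realizable r p (c + e) (m + r * t) (-t) := by
  have hlow : (fun x y => (ascPochhammer ℂ m).eval (x + (r : ℂ) * y - p) *
      (descPochhammer ℂ t).eval y) ∈ realizable r p (t + m) (m + r * t) (-t) :=
    comp_mem_realizable (descPochhammer_W5_mem_realizable le_rfl)
      (ascPochhammer_W2_mem_realizable m) (fun a b h => by omega) (by push_cast; ring) (by ring)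
      fun x y => by simp
  have hrest := mul_mem_realizable
    (ascPochhammer_affine_mem_realizable (r := r) (p := p) 1 r (m - p) (c - m))
    (descPochhammer_affine_mem_realizable 0 1 (-t) (e - t))
  convert realizable_mono (n₂ := c + e) (by omega) (mul_mem_realizable hlow hrest) using 1
  funext x y
  have hx := ascPochhammer_eval_mul_eval_add m (c - m) (x + r * y - p)
  have hy := descPochhammer_eval_mul_eval_sub t (e - t) y
  rw [Nat.add_sub_cancel' hmc] at hx
  rw [Nat.add_sub_cancel' hte] at hy
  simp only [stairSymbol, Pi.mul_apply, ← hx, ← hy]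
  ring_nf

end Symbols

section SymbolSpan

/-- Index set of the symbols `(x)_c (y)_e` of the operators `M_{x^{c+u} y^{e+v}} ∘ D_x^c ∘ D_y^e`
of order at most `n`. -/
def symbolIdx (n : ℕ) (u v : ℤ) : Finset (ℕ × ℕ) :=
  (range (n + 1) ×ˢ range (n + 1)).filter fun ce => ce.1 + ce.2 ≤ n ∧ -u ≤ ce.1 ∧ -v ≤ ce.2

def symbolSpan (n : ℕ) (u v : ℤ) : Submodule ℂ Symbol :=
  Submodule.span ℂ (descSymbol '' symbolIdx n u v)

variable {r p n : ℕ} {u v : ℤ}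

lemma mem_symbolIdx {ce : ℕ × ℕ} :
    ce ∈ symbolIdx n u v ↔ ce.1 + ce.2 ≤ n ∧ -u ≤ ce.1 ∧ -v ≤ ce.2 := by
  simp only [symbolIdx, mem_filter, mem_product, mem_range, and_iff_right_iff_imp]
  omega

lemma symbolIdx_mono {n' : ℕ} (h : n ≤ n') : symbolIdx n u v ⊆ symbolIdx n' u v :=
  fun _ hce => by rw [mem_symbolIdx] at hce ⊢; omega

lemma symbolSpan_le_realizable {t : ℕ} (hu : u ≤ r * t) :
    symbolSpan n u (-t) ≤ realizable r p n u (-t) := by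
  refine Submodule.span_le.2 ?_
  rintro _ ⟨⟨c, e⟩, hce, rfl⟩
  obtain ⟨hn, hc, he⟩ := mem_symbolIdx.1 hce
  exact realizable_mono hn (descSymbol_mem_realizable (by omega) hu (by omega))

lemma apply_eq_zero_of_mem_symbolSpan {σ : Symbol} (hσ : σ ∈ symbolSpan n u v) {a b : ℕ}
    (h : (a : ℤ) + u < 0 ∨ (b : ℤ) + v < 0) : σ a b = 0 := by
  induction hσ using Submodule.span_induction with
  | mem _ hσ =>
    obtain ⟨⟨c, e⟩, hce, rfl⟩ := hσ
    obtain ⟨-, hc, he⟩ := mem_symbolIdx.1 hce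
    rcases h with h | h
    · simp [descSymbol, descPochhammer_eval_coe_nat_of_lt (show a < c by omega)]
    · simp [descSymbol, descPochhammer_eval_coe_nat_of_lt (show b < e by omega)]
  | zero => rfl
  | add _ _ _ _ h₁ h₂ => simp [h₁, h₂]
  | smul _ _ _ h => simp [h]

lemma mul_sub_mem_span_stairSymbol (γ : ℂ) :
    Submodule.span ℂ (stairSymbol r p '' symbolIdx n u v) ≤
      (Submodule.span ℂ (stairSymbol r p '' symbolIdx (n + 1) u v)).comap
        (LinearMap.mulLeft ℂ (fun x _ => x - γ)) := by
  refine Submodule.span_le.2 ?_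
  rintro _ ⟨⟨c, e⟩, hce, rfl⟩
  obtain ⟨hn, hc, he⟩ := mem_symbolIdx.1 hce
  have hmem : ∀ ce ∈ ({(c + 1, e), (c, e + 1), (c, e)} : Set (ℕ × ℕ)),
      stairSymbol r p ce ∈ Submodule.span ℂ (stairSymbol r p '' symbolIdx (n + 1) u v) := by
    rintro ce hce'
    refine Submodule.subset_span ⟨ce, mem_symbolIdx.2 ?_, rfl⟩
    rcases hce' with rfl | rfl | rfl <;> simp only <;> omega
  have key : (fun x _ => x - γ) * stairSymbol r p (c, e) = stairSymbol r p (c + 1, e) -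
      (r : ℂ) • stairSymbol r p (c, e + 1) + (p - c - r * e - γ) • stairSymbol r p (c, e) := by
    funext x y
    simp only [stairSymbol, Pi.mul_apply, Pi.sub_apply, Pi.add_apply, Pi.smul_apply, smul_eq_mul,
      ascPochhammer_succ_eval, descPochhammer_succ_eval]
    ring
  rw [SetLike.mem_coe, Submodule.mem_comap, LinearMap.mulLeft_apply, key]
  exact add_mem (sub_mem (hmem _ (by simp)) (Submodule.smul_mem _ _ (hmem _ (by simp))))
    (Submodule.smul_mem _ _ (hmem _ (by simp)))

lemma descSymbol_mem_span_stairSymbol (hu : 0 ≤ u) {c e : ℕ} (he : -v ≤ e) :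
    descSymbol (c, e) ∈ Submodule.span ℂ (stairSymbol r p '' symbolIdx (c + e) u v) := by
  induction c with
  | zero =>
    refine Submodule.subset_span ⟨(0, e), mem_symbolIdx.2 ⟨by simp, by simpa, he⟩, ?_⟩
    funext x y
    simp [stairSymbol, descSymbol]
  | succ c ih =>
    have key : descSymbol (c + 1, e) = (fun x _ => x - c : Symbol) * descSymbol (c, e) := by
      funext x y
      simp only [descSymbol, Pi.mul_apply, descPochhammer_succ_eval]
      ring
    rw [key, show c + 1 + e = c + e + 1 by ring]
    exact mul_sub_mem_span_stairSymbol (c : ℂ) ih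

lemma symbolSpan_le_span_stairSymbol (hu : 0 ≤ u) :
    symbolSpan n u v ≤ Submodule.span ℂ (stairSymbol r p '' symbolIdx n u v) := by
  refine Submodule.span_le.2 ?_
  rintro _ ⟨⟨c, e⟩, hce, rfl⟩
  obtain ⟨hn, -, he⟩ := mem_symbolIdx.1 hce
  exact Submodule.span_mono (Set.image_mono (symbolIdx_mono hn))
    (descSymbol_mem_span_stairSymbol hu he)

end SymbolSpan

lemma eq_zero_of_triangular {ι X K : Type*} [CommRing K] [NoZeroDivisors K] {S : Finset ι}
    {g : ι → X → K} {pt : ι → X} (rk : ι → ℕ) {h : ι → K}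
    (hdiag : ∀ α ∈ S, g α (pt α) ≠ 0)
    (hlower : ∀ α ∈ S, ∀ β ∈ S, β ≠ α → g β (pt α) ≠ 0 → rk β < rk α)
    (hsum : ∀ α ∈ S, ∑ β ∈ S, h β * g β (pt α) = 0) : ∀ α ∈ S, h α = 0 := by
  intro α
  induction hn : rk α using Nat.strong_induction_on generalizing α with
  | _ n ih =>
    intro hα
    have hα' := hsum α hα
    rw [Finset.sum_eq_single_of_mem α hα fun β hβ hne => ?_] at hα'
    · exact (mul_eq_zero.1 hα').resolve_right (hdiag α hα)
    · by_cases hg : g β (pt α) = 0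
      · rw [hg, mul_zero]
      · rw [ih (rk β) (hn ▸ hlower α hα β hβ hne hg) β rfl hβ, zero_mul]

section StairSymbols

variable {r p q : ℕ}

lemma stairSymbol_apply_of_add_eq {a b j : ℕ} (h : a + r * b + j = p) (ce : ℕ × ℕ) :
    stairSymbol r p ce a b =
      (ascPochhammer ℂ ce.1).eval (-(j : ℂ)) * (descPochhammer ℂ ce.2).eval (b : ℂ) := by
  rw [stairSymbol, ← h]
  push_cast
  ring_nf

lemma stairSymbol_apply_eq_zero {a b j : ℕ} (h : a + r * b + j = p) {ce : ℕ × ℕ}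
    (hce : j < ce.1 ∨ b < ce.2) : stairSymbol r p ce a b = 0 := by
  rw [stairSymbol_apply_of_add_eq h]
  rcases hce with hc | he
  · rw [ascPochhammer_eval_neg_coe_nat_of_lt hc, zero_mul]
  · rw [descPochhammer_eval_coe_nat_of_lt he, mul_zero]

lemma stairSymbol_apply_corner_ne_zero {ce : ℕ × ℕ} (h : ce.1 + r * ce.2 ≤ p) :
    stairSymbol r p ce (p - ce.1 - r * ce.2 : ℕ) ce.2 ≠ 0 := by
  rw [stairSymbol_apply_of_add_eq (j := ce.1) (by omega), descPochhammer_eval_eq_descFactorial,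
    Nat.descFactorial_self]
  refine mul_ne_zero ?_ (Nat.cast_ne_zero.2 (Nat.factorial_ne_zero _))
  rw [Ne, ascPochhammer_eval_eq_zero_iff]
  rintro ⟨k, hk, hkc⟩
  rw [neg_neg, Nat.cast_inj] at hkc
  omega

lemma stairSymbol_apply_eq_zero_of_not_stair {a b : ℕ} (hab : a + r * b ≤ p) (hb : b ≤ q)
    {ce : ℕ × ℕ} (hce : ¬ (ce.1 + r * ce.2 ≤ p ∧ ce.2 ≤ q)) : stairSymbol r p ce a b = 0 := by
  refine stairSymbol_apply_eq_zero (j := p - a - r * b) (by omega) ?_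
  by_contra! h
  have := Nat.mul_le_mul_left r h.2
  omega

/-- Evaluating at the corners `(p - c - r e, e)` of the staircase gives a triangular system. -/
lemma coeff_eq_zero_of_stair {m : ℕ} {J : Finset (ℕ × ℕ)} (h : ℕ × ℕ → ℂ)
    (hp : ∀ a b : ℕ, a + r * b ≤ p → b ≤ q → p < a + r * b + m →
      ∑ ce ∈ J, h ce * stairSymbol r p ce a b = 0) :
    ∀ ce ∈ J, ce.1 < m → ce.1 + r * ce.2 ≤ p → ce.2 ≤ q → h ce = 0 := by
  let S := J.filter fun ce => ce.1 < m ∧ ce.1 + r * ce.2 ≤ p ∧ ce.2 ≤ q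
  have hS : ∀ α ∈ S, h α = 0 := by
    refine eq_zero_of_triangular (g := fun ce (ab : ℕ × ℕ) => stairSymbol r p ce ab.1 ab.2)
      (pt := fun ce => (p - ce.1 - r * ce.2, ce.2)) (fun ce => ce.1 + ce.2)
      (fun α hα => stairSymbol_apply_corner_ne_zero (mem_filter.1 hα).2.2.1)
      (fun α hα β _ hne hβ => ?_) (fun α hα => ?_)
    · dsimp only at hβ ⊢
      have hαS := (mem_filter.1 hα).2
      have : ¬ (α.1 < β.1 ∨ α.2 < β.2) := fun h' =>
        hβ (stairSymbol_apply_eq_zero (j := α.1) (by omega) h')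
      have : β.1 ≠ α.1 ∨ β.2 ≠ α.2 := by rwa [Ne, Prod.ext_iff, not_and_or] at hne
      omega
    · obtain ⟨-, hαm, hαp, hαq⟩ := mem_filter.1 hα
      dsimp only
      rw [Finset.sum_subset (filter_subset _ J) fun β hβ hβS => ?_]
      · exact hp _ _ (by omega) hαq (by omega)
      · rw [mem_filter, not_and, not_and_or, not_lt, not_and_or] at hβS
        rcases (hβS hβ).symm with hβ' | hβ'
        · rw [stairSymbol_apply_eq_zero_of_not_stair (by omega) hαq (by tauto), mul_zero]
        · rw [stairSymbol_apply_eq_zero (j := α.1) (by omega) (Or.inl (by omega)), mul_zero]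
  exact fun ce hce hm hp hq => hS ce (mem_filter.2 ⟨hce, hm, hp, hq⟩)

lemma exists_realizable_eq_of_stair (hr : 0 < r) (hq : r * q ≤ p) {J : Finset (ℕ × ℕ)}
    {k t m : ℕ} (hJ : ∀ ce ∈ J, t ≤ ce.2 ∧ ce.1 + ce.2 ≤ k) (h : ℕ × ℕ → ℂ)
    (hp : ∀ a b : ℕ, a + r * b ≤ p → b ≤ q → p < a + r * b + m →
      ∑ ce ∈ J, h ce * stairSymbol r p ce a b = 0) :
    ∃ τ ∈ realizable r p k (m + r * t) (-t),
      (∀ a b : ℕ, a + r * b ≤ p → b ≤ q → τ a b = ∑ ce ∈ J, h ce * stairSymbol r p ce a b) ∧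
      (k ≤ q → τ = ∑ ce ∈ J, h ce • stairSymbol r p ce) := by
  have hlow := coeff_eq_zero_of_stair h hp
  refine ⟨∑ ce ∈ J with m ≤ ce.1, h ce • stairSymbol r p ce, Submodule.sum_mem _ fun ce hce => ?_,
    fun a b hab hb => ?_, fun hkq => Finset.sum_filter_of_ne fun ce hce hne => ?_⟩
  · obtain ⟨hce, hmc⟩ := mem_filter.1 hce
    exact Submodule.smul_mem _ _
      (realizable_mono (hJ ce hce).2 (stairSymbol_mem_realizable (hJ ce hce).1 hmc))
  · simp only [Finset.sum_apply, Pi.smul_apply, smul_eq_mul]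
    refine Finset.sum_filter_of_ne fun ce hce hne => ?_
    by_contra! hmc
    by_cases hst : ce.1 + r * ce.2 ≤ p ∧ ce.2 ≤ q
    · exact hne (by rw [hlow ce hce hmc hst.1 hst.2, zero_mul])
    · exact hne (by rw [stairSymbol_apply_eq_zero_of_not_stair hab hb hst, mul_zero])
  · by_contra! hmc
    obtain ⟨hte, hk⟩ := hJ ce hce
    have h₁ : ce.1 ≤ r * ce.1 := Nat.le_mul_of_pos_left _ hr
    have h₂ : r * (ce.1 + ce.2) ≤ r * q := Nat.mul_le_mul_left r (by omega)
    rw [mul_add] at h₂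
    exact hne (by rw [hlow ce hce hmc (by omega) (by omega), zero_smul])

lemma exists_realizable_eq (hr : 0 < r) (hq : r * q ≤ p) {k : ℕ} {u v : ℤ} {σ : Symbol}
    (hσ : σ ∈ symbolSpan k u v) (hy : 0 < v → ∀ a b : ℕ, σ a b = 0)
    (hp : ∀ a b : ℕ, a + r * b ≤ p → b ≤ q → (p : ℤ) < a + u + r * (b + v) → σ a b = 0) :
    ∃ τ ∈ realizable r p k u v, (∀ a b : ℕ, a + r * b ≤ p → b ≤ q → τ a b = σ a b) ∧
      (k ≤ q → ∀ a b : ℕ, τ a b = σ a b) := by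
  rcases lt_or_ge 0 v with hv | hv
  · exact ⟨0, zero_mem _, fun a b _ _ => (hy hv a b).symm, fun _ a b => (hy hv a b).symm⟩
  obtain ⟨t, rfl⟩ : ∃ t : ℕ, v = -t := ⟨(-v).toNat, by omega⟩
  rcases le_or_gt u (r * t) with hu | hu
  · exact ⟨σ, symbolSpan_le_realizable hu hσ, fun _ _ _ _ => rfl, fun _ _ _ => rfl⟩
  obtain ⟨m, rfl⟩ : ∃ m : ℕ, u = m + r * t := ⟨(u - r * t).toNat, by omega⟩
  obtain ⟨h, rfl⟩ := (Submodule.mem_span_image_finset_iff_exists_fun' ..).1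
    (symbolSpan_le_span_stairSymbol (r := r) (p := p) (by positivity) hσ)
  have hJ : ∀ ce ∈ symbolIdx k (m + r * t) (-t), t ≤ ce.2 ∧ ce.1 + ce.2 ≤ k := fun ce hce => by
    have := mem_symbolIdx.1 hce
    omega
  obtain ⟨τ, hτ, hstair, hall⟩ := exists_realizable_eq_of_stair hr hq hJ h fun a b hab hb hm => by
    have hshift : (a : ℤ) + (m + r * t) + r * (b + -t) = a + r * b + m := by ring
    simpa [Finset.sum_apply] using hp a b hab hb (by rw [hshift]; exact_mod_cast hm)
  exact ⟨τ, hτ, fun a b hab hb => by simpa [Finset.sum_apply] using hstair a b hab hb,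
    fun hkq a b => by rw [hall hkq]⟩

end StairSymbols

section DiffOp

lemma isShiftOp_elem (s : Fin 2 →₀ ℕ) (μ : ℂ) (i j : ℕ) :
    IsShiftOp (s 0 - i) (s 1 - j) (μ • descSymbol (i, j))
      (Mf (monomial s μ) * Dx ^ i * Dy ^ j) := by
  have hx := (isShiftOp_Mf_monomial s μ).mul (isShiftOp_Dx_pow i)
    (fun a b h => descPochhammer_eval_coe_nat_of_lt (by omega)) (sub_eq_add_neg _ _).symm
    (add_zero _) fun x y => rfl
  refine hx.mul (isShiftOp_Dy_pow j) (fun a b h => descPochhammer_eval_coe_nat_of_lt (by omega))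
    (add_zero _) (sub_eq_add_neg _ _).symm fun x y => ?_
  simp [descSymbol]
  ring

def diffOp (I : Finset (ℕ × ℕ)) (f : ℕ × ℕ → R2) : Module.End ℂ R2 :=
  ∑ ij ∈ I, Mf (f ij) * Dx ^ ij.1 * Dy ^ ij.2

/-- `⟨(i, j), s⟩` stands for the term `M_{c x^s} ∘ D_x^i ∘ D_y^j` of `diffOp I f`, where `c` is
the coefficient of `x^s` in `f (i, j)`. -/
def termShift (κ : Σ _ : ℕ × ℕ, Fin 2 →₀ ℕ) : ℤ × ℤ :=
  ((κ.2 0 : ℤ) - κ.1.1, (κ.2 1 : ℤ) - κ.1.2)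

variable (I : Finset (ℕ × ℕ)) (f : ℕ × ℕ → R2)

def shifts : Finset (ℤ × ℤ) := (I.sigma fun ij => (f ij).support).image termShift

def shiftSymbol (uv : ℤ × ℤ) : Symbol :=
  ∑ κ ∈ (I.sigma fun ij => (f ij).support) with termShift κ = uv,
    coeff κ.2 (f κ.1) • descSymbol κ.1

variable {I f}

lemma diffOp_apply_mono_eq_sum (a b : ℕ) :
    diffOp I f (mono a b) = ∑ κ ∈ I.sigma fun ij => (f ij).support,
      (coeff κ.2 (f κ.1) • descSymbol κ.1) a b •
        monoZ (a + (termShift κ).1) (b + (termShift κ).2) := by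
  rw [diffOp, LinearMap.sum_apply, Finset.sum_sigma]
  refine sum_congr rfl fun ij _ => ?_
  have hMf : Mf (f ij) = ∑ s ∈ (f ij).support, Mf (monomial s (coeff s (f ij))) := by
    conv_lhs => rw [← support_sum_monomial_coeff (f ij)]
    exact map_sum (LinearMap.mul ℂ R2) _ _
  rw [hMf, Finset.sum_mul, Finset.sum_mul, LinearMap.sum_apply]
  exact sum_congr rfl fun s _ => isShiftOp_elem s _ ij.1 ij.2 a b

lemma diffOp_apply_mono (a b : ℕ) :
    diffOp I f (mono a b) =
      ∑ uv ∈ shifts I f, shiftSymbol I f uv a b • monoZ (a + uv.1) (b + uv.2) := by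
  rw [diffOp_apply_mono_eq_sum, ← Finset.sum_fiberwise_of_maps_to
    (g := termShift) (t := shifts I f) fun κ hκ => mem_image_of_mem _ hκ]
  refine sum_congr rfl fun uv _ => ?_
  rw [shiftSymbol, Finset.sum_apply, Finset.sum_apply, Finset.sum_smul]
  exact sum_congr rfl fun κ hκ => by rw [(mem_filter.1 hκ).2]

lemma coeff_diffOp_apply_mono (a b A B : ℕ) :
    coeff (monoExp A B) (diffOp I f (mono a b)) =
      shiftSymbol I f ((A : ℤ) - a, (B : ℤ) - b) a b := by
  rw [diffOp_apply_mono_eq_sum, coeff_sum, shiftSymbol, Finset.sum_apply, Finset.sum_apply,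
    Finset.sum_filter]
  refine sum_congr rfl fun κ _ => ?_
  rw [coeff_smul, coeff_monoExp_monoZ, smul_eq_mul]
  by_cases h : termShift κ = ((A : ℤ) - a, (B : ℤ) - b)
  · rw [if_pos h, if_pos (by rw [h]; omega), mul_one]
  · rw [if_neg h, if_neg fun h' => h (Prod.ext (by omega) (by omega)), mul_zero]

variable {k : ℕ}

lemma shiftSymbol_mem_symbolSpan (hI : ∀ ij ∈ I, ij.1 + ij.2 ≤ k) (uv : ℤ × ℤ) :
    shiftSymbol I f uv ∈ symbolSpan k uv.1 uv.2 := by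
  refine Submodule.sum_mem _ fun κ hκ => Submodule.smul_mem _ _ (Submodule.subset_span ?_)
  obtain ⟨hκI, rfl⟩ := mem_filter.1 hκ
  refine ⟨κ.1, mem_symbolIdx.2 ⟨hI _ (mem_sigma.1 hκI).1, ?_, ?_⟩, rfl⟩ <;> simp [termShift]

lemma shiftSymbol_eq_zero_of_coeff_eq_zero (hI : ∀ ij ∈ I, ij.1 + ij.2 ≤ k) {uv : ℤ × ℤ}
    {a b : ℕ} (h : ∀ A B : ℕ, (A : ℤ) = a + uv.1 → (B : ℤ) = b + uv.2 →
      coeff (monoExp A B) (diffOp I f (mono a b)) = 0) : shiftSymbol I f uv a b = 0 := by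
  by_cases hpos : 0 ≤ (a : ℤ) + uv.1 ∧ 0 ≤ (b : ℤ) + uv.2
  · obtain ⟨A, hA⟩ := Int.eq_ofNat_of_zero_le hpos.1
    obtain ⟨B, hB⟩ := Int.eq_ofNat_of_zero_le hpos.2
    rw [← h A B hA.symm hB.symm, coeff_diffOp_apply_mono]
    congr
    ext <;> simp <;> omega
  · exact apply_eq_zero_of_mem_symbolSpan (shiftSymbol_mem_symbolSpan hI uv) (by omega)

lemma shiftSymbol_eq_zero_of_nonposY (hI : ∀ ij ∈ I, ij.1 + ij.2 ≤ k) (hy : NonposY (diffOp I f))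
    {uv : ℤ × ℤ} (hv : 0 < uv.2) (a b : ℕ) : shiftSymbol I f uv a b = 0 :=
  shiftSymbol_eq_zero_of_coeff_eq_zero hI fun A B _ hB => by
    have hab := hy a b
    rw [Xv_pow_mul_Yv_pow] at hab
    exact coeff_eq_zero_of_mem_span (P := fun _ e => e ≤ b) (fun g hg => hg) hab (by omega)

lemma shiftSymbol_eq_zero_of_preserves {r p q : ℕ} (hI : ∀ ij ∈ I, ij.1 + ij.2 ≤ k)
    (hpres : ∀ v ∈ Smod r p q, diffOp I f v ∈ Smod r p q) {uv : ℤ × ℤ} {a b : ℕ}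
    (hab : a + r * b ≤ p) (hb : b ≤ q) (hout : (p : ℤ) < a + uv.1 + r * (b + uv.2)) :
    shiftSymbol I f uv a b = 0 := by
  refine shiftSymbol_eq_zero_of_coeff_eq_zero hI fun A B hA hB => ?_
  have hmem : mono a b ∈ Smod r p q :=
    Xv_pow_mul_Yv_pow a b ▸ Submodule.subset_span ⟨a, b, hab, hb, rfl⟩
  refine coeff_eq_zero_of_mem_span (P := fun c e => c + r * e ≤ p ∧ e ≤ q)
    (by rintro _ ⟨c, e, hc, he, rfl⟩; exact ⟨c, e, ⟨hc, he⟩, rfl⟩) (hpres _ hmem) fun hAB => ?_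
  have : (A : ℤ) + r * B ≤ p := by exact_mod_cast hAB.1
  rw [hA, hB] at this
  omega

end DiffOp

end Staircase

open Staircase in
theorem stmt13 (r p q k : ℕ) (hr : 2 ≤ r) (hq : r * q ≤ p) (f : ℕ × ℕ → R2)
    (T : Module.End ℂ R2)
    (hT : T = ∑ ij ∈ (sIdx r p q).filter (fun ij => ij.1 + ij.2 ≤ k),
      Mf (f ij) * Dx ^ ij.1 * Dy ^ ij.2)
    (hpres : ∀ v ∈ Smod r p q, T v ∈ Smod r p q)
    (hy : NonposY T) :
    ∃ P ∈ Submodule.span ℂ (prodsLE k (Wset r p)),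
      (∀ v ∈ Smod r p q, T v = P v) ∧ (k ≤ q → T = P) := by
  classical
  set I := (sIdx r p q).filter (fun ij => ij.1 + ij.2 ≤ k)
  have hI : ∀ ij ∈ I, ij.1 + ij.2 ≤ k := fun ij hij => (Finset.mem_filter.1 hij).2
  change T = diffOp I f at hT
  subst hT
  choose τ hτ hstair hall using fun uv : ℤ × ℤ => exists_realizable_eq (by omega) hq
    (shiftSymbol_mem_symbolSpan hI uv) (fun hv => shiftSymbol_eq_zero_of_nonposY hI hy hv)
    (fun a b hab hb => shiftSymbol_eq_zero_of_preserves hI hpres hab hb)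
  choose P hP hPτ using hτ
  refine ⟨∑ uv ∈ shifts I f, P uv, Submodule.sum_mem _ fun uv _ => hP uv,
    eqOn_Smod_of_mono fun a b hab hb => ?_, fun hkq => ext_mono fun a b => ?_⟩
  · rw [diffOp_apply_mono, LinearMap.sum_apply]
    exact Finset.sum_congr rfl fun uv _ => by rw [hPτ, hstair uv a b hab hb]
  · rw [diffOp_apply_mono, LinearMap.sum_apply]
    exact Finset.sum_congr rfl fun uv _ => by rw [hPτ, hall uv hkq a b]
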